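/- The critical values of the rational map R(z) = ((1+2ω₃)(z³ + z⁻³) − 6)/((1+2ω₃)(z³ + z⁻³) + 6) (equivalently, its branch values as a branched cover of the Riemann sphere) are contained in the set {1, ω₃, ω₃²}. -/

import Mathlib

/-!
Write `R = P/Q` with `P = c(z⁶+1) - 6z³`, `Q = c(z⁶+1) + 6z³` and `c = 1 + 2ω₃`, so `c² = -3`.
The Wronskian `P'Q - PQ'` equals `36 c z² (z⁶ - 1)`, so the finite critical points are `z = 0`
and the sixth roots of unity, with values `1`, `(2c - 6)/(2c + 6) = ω₃` and
`(2c + 6)/(2c - 6) = ω₃²`. The poles avoid these points because `c² ≠ 9`, so `Q/P` has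
nonvanishing derivative there, and `P`, `Q` are palindromic, so the chart at `∞` is `R` again.
-/

namespace PalindromicSextic

variable {𝕜 : Type*}

section Field

variable [Field 𝕜] (c : 𝕜)

def num (z : 𝕜) : 𝕜 := c * (z ^ 6 + 1) - 6 * z ^ 3

def den (z : 𝕜) : 𝕜 := c * (z ^ 6 + 1) + 6 * z ^ 3

@[simp] lemma num_zero : num c 0 = c := by simp [num]

@[simp] lemma den_zero : den c 0 = c := by simp [den]

lemma num_div_den_zero (hc : c ≠ 0) : num c 0 / den c 0 = 1 := by
  simp [hc]

lemma num_one_div {w : 𝕜} (hw : w ≠ 0) : num c (1 / w) = num c w / w ^ 6 := by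
  simp only [num]; field_simp; ring

lemma den_one_div {w : 𝕜} (hw : w ≠ 0) : den c (1 / w) = den c w / w ^ 6 := by
  simp only [den]; field_simp; ring

lemma num_div_den_one_div {w : 𝕜} (hw : w ≠ 0) :
    num c w / den c w = num c (1 / w) / den c (1 / w) := by
  rw [num_one_div c hw, den_one_div c hw, div_div_div_cancel_right₀ (pow_ne_zero 6 hw)]

lemma wronskian_num_den (z : 𝕜) :
    (6 * c * z ^ 5 - 18 * z ^ 2) * den c z - num c z * (6 * c * z ^ 5 + 18 * z ^ 2) =
      36 * c * z ^ 2 * (z ^ 6 - 1) := by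
  simp only [num, den]; ring

lemma num_eq_den_sub (z : 𝕜) : num c z = den c z - 12 * z ^ 3 := by
  simp only [num, den]; ring

lemma num_of_pow_three_eq_one {z : 𝕜} (hz : z ^ 3 = 1) : num c z = 2 * c - 6 := by
  simp only [num]; linear_combination (c * (z ^ 3 + 1) - 6) * hz

lemma den_of_pow_three_eq_one {z : 𝕜} (hz : z ^ 3 = 1) : den c z = 2 * c + 6 := by
  simp only [den]; linear_combination (c * (z ^ 3 + 1) + 6) * hz

lemma num_of_pow_three_eq_neg_one {z : 𝕜} (hz : z ^ 3 = -1) : num c z = 2 * c + 6 := by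
  simp only [num]; linear_combination (c * (z ^ 3 - 1) - 6) * hz

lemma den_of_pow_three_eq_neg_one {z : 𝕜} (hz : z ^ 3 = -1) : den c z = 2 * c - 6 := by
  simp only [den]; linear_combination (c * (z ^ 3 - 1) + 6) * hz

variable [CharZero 𝕜] {c}

lemma ne_zero_of_sq_eq_neg_three (hc : c ^ 2 = -3) : c ≠ 0 := by
  rintro rfl; norm_num at hc

lemma eq_zero_or_pow_three_eq_one_or_neg_one (hc : c ≠ 0) {z : 𝕜}
    (h : 36 * c * z ^ 2 * (z ^ 6 - 1) = 0) : z = 0 ∨ z ^ 3 = 1 ∨ z ^ 3 = -1 := by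
  have h' : z ^ 2 * ((z ^ 3 - 1) * (z ^ 3 + 1)) = 0 := by
    have : (36 * c) * (z ^ 2 * ((z ^ 3 - 1) * (z ^ 3 + 1))) = 0 := by linear_combination h
    exact (mul_eq_zero.mp this).resolve_left (mul_ne_zero (by norm_num) hc)
  rcases mul_eq_zero.mp h' with h0 | h1
  · exact .inl (pow_eq_zero_iff two_ne_zero |>.mp h0)
  · rcases mul_eq_zero.mp h1 with h1 | h1
    · exact .inr (.inl (sub_eq_zero.mp h1))
    · exact .inr (.inr (eq_neg_of_add_eq_zero_left h1))

-- At a sixth root of unity, `den c z = 0` would force `36 = 36 z⁶ = (6z³)² = 4c² = -12`.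
lemma den_ne_zero_of_pow_six_eq_one (hc : c ^ 2 = -3) {z : 𝕜} (hz : z ^ 6 = 1) :
    den c z ≠ 0 := by
  intro h
  simp only [den] at h
  have : (48 : 𝕜) = 0 := by
    linear_combination (-36 : 𝕜) * hz + 4 * hc + (6 * z ^ 3 - 2 * c) * (h - c * hz)
  norm_num at this

lemma wronskian_ne_zero_of_den_eq_zero (hc : c ^ 2 = -3) {z : 𝕜} (hz : den c z = 0) :
    36 * c * z ^ 2 * (z ^ 6 - 1) ≠ 0 := by
  have hc0 := ne_zero_of_sq_eq_neg_three hc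
  have hz0 : z ≠ 0 := by rintro rfl; simp [hc0] at hz
  have hz6 : z ^ 6 - 1 ≠ 0 := fun h => den_ne_zero_of_pow_six_eq_one hc (sub_eq_zero.mp h) hz
  exact mul_ne_zero (mul_ne_zero (mul_ne_zero (by norm_num) hc0) (pow_ne_zero 2 hz0)) hz6

lemma num_ne_zero_of_den_eq_zero (hc : c ^ 2 = -3) {z : 𝕜} (hz : den c z = 0) :
    num c z ≠ 0 := by
  have hz0 : z ≠ 0 := by rintro rfl; simp [ne_zero_of_sq_eq_neg_three hc] at hz
  rw [num_eq_den_sub, hz, zero_sub, neg_ne_zero]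
  exact mul_ne_zero (by norm_num) (pow_ne_zero 3 hz0)

end Field

section Deriv

variable [NontriviallyNormedField 𝕜] (c : 𝕜)

lemma hasDerivAt_num (z : 𝕜) : HasDerivAt (num c) (6 * c * z ^ 5 - 18 * z ^ 2) z := by
  have h := (((hasDerivAt_pow 6 z).add_const 1).const_mul c).sub
    ((hasDerivAt_pow 3 z).const_mul 6)
  exact h.congr_deriv (by push_cast; ring)

lemma hasDerivAt_den (z : 𝕜) : HasDerivAt (den c) (6 * c * z ^ 5 + 18 * z ^ 2) z := by
  have h := (((hasDerivAt_pow 6 z).add_const 1).const_mul c).add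
    ((hasDerivAt_pow 3 z).const_mul 6)
  exact h.congr_deriv (by push_cast; ring)

lemma deriv_num_div_den {z : 𝕜} (hz : den c z ≠ 0) :
    deriv (fun x => num c x / den c x) z = 36 * c * z ^ 2 * (z ^ 6 - 1) / den c z ^ 2 := by
  rw [show (fun x => num c x / den c x) = num c / den c from rfl,
    ((hasDerivAt_num c z).div (hasDerivAt_den c z) hz).deriv, wronskian_num_den]

lemma deriv_den_div_num {z : 𝕜} (hz : num c z ≠ 0) :
    deriv (fun x => den c x / num c x) z = -(36 * c * z ^ 2 * (z ^ 6 - 1)) / num c z ^ 2 := by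
  rw [show (fun x => den c x / num c x) = den c / num c from rfl,
    ((hasDerivAt_den c z).div (hasDerivAt_num c z) hz).deriv, ← wronskian_num_den]
  ring

variable [CharZero 𝕜] {c}

lemma critical_point_cases (hc : c ≠ 0) {z : 𝕜} (hz : den c z ≠ 0)
    (hd : deriv (fun x => num c x / den c x) z = 0) : z = 0 ∨ z ^ 3 = 1 ∨ z ^ 3 = -1 := by
  rw [deriv_num_div_den c hz, div_eq_zero_iff] at hd
  exact eq_zero_or_pow_three_eq_one_or_neg_one hc (hd.resolve_right (pow_ne_zero 2 hz))

lemma deriv_den_div_num_ne_zero_of_den_eq_zero (hc : c ^ 2 = -3) {z : 𝕜} (hz : den c z = 0) :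
    deriv (fun x => den c x / num c x) z ≠ 0 := by
  have hP := num_ne_zero_of_den_eq_zero hc hz
  rw [deriv_den_div_num c hP]
  exact div_ne_zero (neg_ne_zero.mpr (wronskian_ne_zero_of_den_eq_zero hc hz)) (pow_ne_zero 2 hP)

end Deriv

section CubeRoot

variable [Field 𝕜] {ω : 𝕜}

lemma one_add_two_mul_sq (hω : ω ^ 2 + ω + 1 = 0) : (1 + 2 * ω) ^ 2 = -3 := by
  linear_combination 4 * hω

variable [CharZero 𝕜]

lemma two_mul_sub_six_div_two_mul_add_six (hω : ω ^ 2 + ω + 1 = 0) :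
    (2 * (1 + 2 * ω) - 6) / (2 * (1 + 2 * ω) + 6) = ω := by
  have hne : 2 * (1 + 2 * ω) + 6 ≠ 0 := by
    intro h
    have : (3 : 𝕜) = 0 := by linear_combination hω - ((ω - 1) / 4) * h
    norm_num at this
  rw [div_eq_iff hne]; linear_combination -4 * hω

lemma two_mul_add_six_div_two_mul_sub_six (hω : ω ^ 2 + ω + 1 = 0) :
    (2 * (1 + 2 * ω) + 6) / (2 * (1 + 2 * ω) - 6) = ω ^ 2 := by
  have hne : 2 * (1 + 2 * ω) - 6 ≠ 0 := by
    intro h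
    have : (3 : 𝕜) = 0 := by linear_combination hω - ((ω + 2) / 4) * h
    norm_num at this
  rw [div_eq_iff hne]; linear_combination (8 - 4 * ω) * hω

end CubeRoot

lemma critical_value_mem {𝕜 : Type*} [NontriviallyNormedField 𝕜] [CharZero 𝕜] {ω z : 𝕜}
    (hω : ω ^ 2 + ω + 1 = 0) (hz : den (1 + 2 * ω) z ≠ 0)
    (hd : deriv (fun x => num (1 + 2 * ω) x / den (1 + 2 * ω) x) z = 0) :
    num (1 + 2 * ω) z / den (1 + 2 * ω) z ∈ ({1, ω, ω ^ 2} : Set 𝕜) := by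
  have hc := ne_zero_of_sq_eq_neg_three (one_add_two_mul_sq hω)
  rcases critical_point_cases hc hz hd with rfl | h | h
  · exact .inl (num_div_den_zero _ hc)
  · rw [num_of_pow_three_eq_one _ h, den_of_pow_three_eq_one _ h]
    exact .inr (.inl (two_mul_sub_six_div_two_mul_add_six hω))
  · rw [num_of_pow_three_eq_neg_one _ h, den_of_pow_three_eq_neg_one _ h]
    exact .inr (.inr (two_mul_add_six_div_two_mul_sub_six hω))

end PalindromicSextic

open PalindromicSextic in
/-- The critical (branch) values of the degree-6 rational map
`R(z) = ((1+2ω₃)(z³ + z⁻³) − 6) / ((1+2ω₃)(z³ + z⁻³) + 6)`, written in lowest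
terms as `R = P/Q` with `P(z) = (1+2ω₃)(z⁶+1) − 6z³` and
`Q(z) = (1+2ω₃)(z⁶+1) + 6z³`, viewed as a branched self-cover of the Riemann
sphere, are contained in `{1, ω₃, ω₃²}`.  Concretely:
(a) at any point of `ℂ` which is not a pole, if the derivative of `R = P/Q`
vanishes then the value lies in `{1, ω₃, ω₃²}`;
(b) no pole of `R` (a zero of `Q`) is a critical point in the chart `w = 1/R`
(so `∞` is not a branch value);
(c) in the chart `w = 1/z` at `∞` the map reads `P(w)/Q(w)` again (the
polynomials are palindromic), and if its derivative vanishes at `w = 0` the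
value `P(0)/Q(0)` lies in `{1, ω₃, ω₃²}`. -/
theorem stmt5 (ω₃ : ℂ) (hω : ω₃ = Complex.exp (2 * Real.pi * Complex.I / 3))
    (P Q : ℂ → ℂ)
    (hP : P = fun z => (1 + 2 * ω₃) * (z ^ 6 + 1) - 6 * z ^ 3)
    (hQ : Q = fun z => (1 + 2 * ω₃) * (z ^ 6 + 1) + 6 * z ^ 3) :
    (∀ z : ℂ, Q z ≠ 0 → deriv (fun x => P x / Q x) z = 0 →
        P z / Q z ∈ ({1, ω₃, ω₃ ^ 2} : Set ℂ)) ∧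
    (∀ z : ℂ, Q z = 0 → deriv (fun x => Q x / P x) z ≠ 0) ∧
    ((∀ w : ℂ, w ≠ 0 → P w / Q w = P (1 / w) / Q (1 / w)) ∧
      (deriv (fun x => P x / Q x) 0 = 0 →
        P 0 / Q 0 ∈ ({1, ω₃, ω₃ ^ 2} : Set ℂ))) := by
  have hprim : IsPrimitiveRoot ω₃ 3 := by
    rw [hω]; exact_mod_cast Complex.isPrimitiveRoot_exp 3 (by norm_num)
  have hcyc : ω₃ ^ 2 + ω₃ + 1 = 0 := by
    have := hprim.geom_sum_eq_zero (by norm_num)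
    simp only [Finset.sum_range_succ, Finset.sum_range_zero] at this
    linear_combination this
  have hsq := one_add_two_mul_sq hcyc
  obtain rfl : P = num (1 + 2 * ω₃) := hP
  obtain rfl : Q = den (1 + 2 * ω₃) := hQ
  refine ⟨fun z hz hd => critical_value_mem hcyc hz hd,
    fun z hz => deriv_den_div_num_ne_zero_of_den_eq_zero hsq hz,
    fun w hw => num_div_den_one_div _ hw, fun _ => ?_⟩
  exact .inl (num_div_den_zero _ (ne_zero_of_sq_eq_neg_three hsq))
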